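/- arXiv:2602.20996 — 4 statements merged into one kernel-verified Lean document; each statement's English description precedes it below -/
import Mathlib

section
/- Let V be a finite set, R a binary relation on V (viewed as a directed graph on V), and G a finite group. Then the following are equivalent: (1) there exists a group homomorphism φ : G → Perm(V) whose action is free (i.e. φ(g)(v) = v for some v ∈ V implies g = 1) and preserves R (i.e. for all g ∈ G and u, v ∈ V, R(φ(g)(u), φ(g)(v)) holds iff R(u, v) holds); (2) there exist a finite set W, a G-voltage family Ã : G → (W → W → Prop), and a bijection e : V ≃ W × G such that for all u, v ∈ V, R(u, v) holds iff Ã((e(u)₂)⁻¹ · e(v)₂)(e(u)₁, e(v)₁) holds, i.e. e carries R to the derived relation of Ã on W × G. -/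
/-!
A free action of `G` on `V` splits `V` equivariantly as (orbits) × `G`, with `G` acting by left
multiplication on the second factor. An invariant relation is then determined by how a fixed
representative of one orbit relates to the translates of a representative of another, and this
datum is the voltage family. Conversely, left multiplication on the `G`-coordinate is free and
preserves every derived relation, since `(g * h)⁻¹ * (g * k) = h⁻¹ * k`.
-/

open MulAction

variable {G W : Type*} [Group G]

def derivedRel (A : G → W → W → Prop) (p q : W × G) : Prop :=
  A (p.2⁻¹ * q.2) p.1 q.1

variable (W) in
def leftTranslate : G →* Equiv.Perm (W × G) where
  toFun g := Equiv.prodCongrRight fun _ => Equiv.mulLeft g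
  map_one' := by ext <;> simp
  map_mul' g g' := by ext <;> simp

@[simp]
theorem leftTranslate_apply (g : G) (p : W × G) : leftTranslate W g p = (p.1, g * p.2) := rfl

theorem eq_one_of_leftTranslate_apply_eq_self {g : G} {p : W × G} (h : leftTranslate W g p = p) :
    g = 1 :=
  mul_eq_right.mp (congrArg Prod.snd h)

theorem derivedRel_leftTranslate (A : G → W → W → Prop) (g : G) (p q : W × G) :
    derivedRel A (leftTranslate W g p) (leftTranslate W g q) ↔ derivedRel A p q := by
  simp only [derivedRel, leftTranslate_apply, mul_inv_rev, mul_assoc, inv_mul_cancel_left]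

theorem exists_free_invariant_of_equiv_derivedRel {V : Type*} {R : V → V → Prop}
    {A : G → W → W → Prop} (e : V ≃ W × G) (he : ∀ u v, R u v ↔ derivedRel A (e u) (e v)) :
    ∃ φ : G →* Equiv.Perm V,
      (∀ (g : G) (v : V), φ g v = v → g = 1) ∧
      (∀ (g : G) (u v : V), R (φ g u) (φ g v) ↔ R u v) := by
  refine ⟨(Equiv.permCongrHom e.symm).toMonoidHom.comp (leftTranslate W), ?_, ?_⟩
  · intro g v hv
    exact eq_one_of_leftTranslate_apply_eq_self (p := e v) (e.symm_apply_eq.mp hv)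
  · intro g u v
    simp only [he, MonoidHom.comp_apply, MulEquiv.coe_toMonoidHom, Equiv.permCongrHom_coe,
      Equiv.permCongr_apply, Equiv.symm_symm, Equiv.apply_symm_apply, derivedRel_leftTranslate]

noncomputable def orbitProdEquiv {X : Type*} [MulAction G X]
    (hfree : ∀ (g : G) (x : X), g • x = x → g = 1) :
    X ≃ orbitRel.Quotient G X × G :=
  selfEquivOrbitsQuotientProd fun x =>
    (Subgroup.eq_bot_iff_forall _).mpr fun g hg => hfree g x (mem_stabilizer_iff.mp hg)

theorem orbitProdEquiv_symm_apply {X : Type*} [MulAction G X]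
    (hfree : ∀ (g : G) (x : X), g • x = x → g = 1) (ω : orbitRel.Quotient G X) (g : G) :
    (orbitProdEquiv hfree).symm (ω, g) = g • ω.out :=
  rfl

theorem rel_iff_derivedRel_of_equiv {X : Type*} [MulAction G X] {R : X → X → Prop}
    (hR : ∀ (g : G) (x y : X), R (g • x) (g • y) ↔ R x y) (e : X ≃ W × G)
    (he : ∀ (w : W) (g : G), e.symm (w, g) = g • e.symm (w, 1)) (x y : X) :
    R x y ↔ derivedRel (fun a w w' => R (e.symm (w, 1)) (e.symm (w', a))) (e x) (e y) := by
  have hbase : ∀ x, e.symm ((e x).1, 1) = (e x).2⁻¹ • x := fun x => by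
    rw [eq_inv_smul_iff, ← he, Prod.mk.eta, Equiv.symm_apply_apply]
  rw [derivedRel, he _ ((e x).2⁻¹ * (e y).2), mul_smul, hbase, hbase, smul_inv_smul, hR]

theorem exists_equiv_derivedRel_of_free {X : Type*} [MulAction G X] {R : X → X → Prop}
    (hfree : ∀ (g : G) (x : X), g • x = x → g = 1)
    (hR : ∀ (g : G) (x y : X), R (g • x) (g • y) ↔ R x y) :
    ∃ (A : G → orbitRel.Quotient G X → orbitRel.Quotient G X → Prop)
      (e : X ≃ orbitRel.Quotient G X × G), ∀ x y, R x y ↔ derivedRel A (e x) (e y) := by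
  refine ⟨_, orbitProdEquiv hfree, rel_iff_derivedRel_of_equiv hR _ fun w g => ?_⟩
  rw [orbitProdEquiv_symm_apply, orbitProdEquiv_symm_apply, one_smul]

theorem gross_tucker_classical_general {V : Type} [Fintype V] (R : V → V → Prop)
    (G : Type) [Group G] :
    (∃ φ : G →* Equiv.Perm V,
        (∀ (g : G) (v : V), φ g v = v → g = 1) ∧
        (∀ (g : G) (u v : V), R (φ g u) (φ g v) ↔ R u v)) ↔
    (∃ (W : Type) (_ : Fintype W) (A : G → W → W → Prop) (e : V ≃ W × G),
        ∀ u v : V, R u v ↔ A ((e u).2⁻¹ * (e v).2) (e u).1 (e v).1) := by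
  constructor
  · rintro ⟨φ, hfree, hR⟩
    let _ := MulAction.compHom V φ
    obtain ⟨A, e, he⟩ := exists_equiv_derivedRel_of_free hfree hR
    exact ⟨_, Fintype.ofFinite _, A, e, he⟩
  · rintro ⟨W, _, A, e, he⟩
    exact exists_free_invariant_of_equiv_derivedRel e he

/-- **Classical Gross–Tucker theorem.** A directed graph (relation) `R` on a finite
set `V` admits a free `R`-preserving action of a finite group `G` if and only if it is
isomorphic to the derived graph of a `G`-voltage family on some finite set `W`, where
the derived relation on `W × G` relates `(w, h)` to `(w', k)` iff `A (h⁻¹ * k) w w'`. -/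
theorem gross_tucker_classical {V : Type} [Fintype V] (R : V → V → Prop)
    (G : Type) [Group G] [Fintype G] :
    (∃ φ : G →* Equiv.Perm V,
        (∀ (g : G) (v : V), φ g v = v → g = 1) ∧
        (∀ (g : G) (u v : V), R (φ g u) (φ g v) ↔ R u v)) ↔
    (∃ (W : Type) (_ : Fintype W) (A : G → W → W → Prop) (e : V ≃ W × G),
        ∀ u v : V, R u v ↔ A ((e u).2⁻¹ * (e v).2) (e u).1 (e v).1) :=
  gross_tucker_classical_general R G
end

section
/- Let V be a finite set, G a finite group, φ : G → Perm(V) a group homomorphism whose action is free (φ(g)(v) = v for some v implies g = 1), and R a binary relation on V that is G-invariant (for all g ∈ G and u, v ∈ V, R(φ(g)(u), φ(g)(v)) holds iff R(u,v) holds). Let Q denote the quotient of V by the orbit equivalence relation of this action, and for v ∈ V let [v] ∈ Q denote its orbit. Then there exist a G-voltage family Ã : G → (Q → Q → Prop) on Q and a bijection e : V ≃ Q × G such that: (i) for all v ∈ V, the first component e(v)₁ equals [v]; (ii) e is equivariant: for all g ∈ G and v ∈ V, e(φ(g)(v)) = (e(v)₁, g · e(v)₂); and (iii) for all u, v ∈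 V, R(u,v) holds iff Ã((e(u)₂)⁻¹ · e(v)₂)(e(u)₁, e(v)₁) holds, i.e. e carries R to the derived relation of Ã on Q × G. -/
/-!
Pick a representative `q.out` of every orbit `q`. Since the action is free, every `v` is
`φ g q.out` for a unique `g`, its coordinate, and this identifies `V` with `Q × G`
equivariantly. Translating a pair `(u, v)` by the inverse of the coordinate of `u` moves `u`
onto its representative, so by invariance `R u v` only depends on the two orbits and on the
difference of the coordinates: that is the voltage family.
-/

/-- The orbit equivalence relation on `V` induced by a homomorphism `φ : G →* Equiv.Perm V`:
`u ≈ v` iff some group element moves `u` to `v`. -/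
def orbitSetoid {V G : Type} [Group G] (φ : G →* Equiv.Perm V) : Setoid V where
  r u v := ∃ g : G, φ g u = v
  iseqv := by
    constructor
    · intro u
      exact ⟨1, by simp⟩
    · rintro u v ⟨g, rfl⟩
      refine ⟨g⁻¹, ?_⟩
      rw [← Equiv.Perm.mul_apply, ← map_mul, inv_mul_cancel, map_one, Equiv.Perm.one_apply]
    · rintro u v w ⟨g, rfl⟩ ⟨g', rfl⟩
      refine ⟨g' * g, ?_⟩
      rw [map_mul, Equiv.Perm.mul_apply]

namespace orbitSetoid

variable {V G : Type} [Group G] {φ : G →* Equiv.Perm V}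

theorem mk_apply (g : G) (v : V) :
    Quotient.mk (orbitSetoid φ) (φ g v) = Quotient.mk (orbitSetoid φ) v :=
  Quotient.sound ⟨g⁻¹, by simp⟩

theorem eq_of_apply_eq (hfree : ∀ (g : G) (v : V), φ g v = v → g = 1) {g g' : G} {x : V}
    (h : φ g x = φ g' x) : g = g' := by
  have hfix : φ (g'⁻¹ * g) x = x := by simp [h]
  exact (inv_mul_eq_one.mp (hfree _ _ hfix)).symm

-- Some `g` with `φ g ⟦v⟧.out = v`; it is unique when the action is free.
variable (φ) in
noncomputable def coord (v : V) : G :=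
  (Quotient.mk_out (s := orbitSetoid φ) v).choose

variable (φ) in
theorem coord_spec (v : V) : φ (coord φ v) (Quotient.mk (orbitSetoid φ) v).out = v :=
  (Quotient.mk_out (s := orbitSetoid φ) v).choose_spec

theorem coord_apply (hfree : ∀ (g : G) (v : V), φ g v = v → g = 1) (g : G) (v : V) :
    coord φ (φ g v) = g * coord φ v := by
  refine eq_of_apply_eq hfree (x := (Quotient.mk (orbitSetoid φ) v).out) ?_
  have h := coord_spec φ (φ g v)
  rw [mk_apply] at h
  rw [h, map_mul, Equiv.Perm.mul_apply, coord_spec]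

theorem coord_out (hfree : ∀ (g : G) (v : V), φ g v = v → g = 1)
    (q : Quotient (orbitSetoid φ)) : coord φ q.out = 1 := by
  refine eq_of_apply_eq hfree (x := q.out) ?_
  have h := coord_spec φ q.out
  rw [Quotient.out_eq] at h
  rw [h, map_one, Equiv.Perm.one_apply]

noncomputable def prodEquiv (hfree : ∀ (g : G) (v : V), φ g v = v → g = 1) :
    V ≃ Quotient (orbitSetoid φ) × G where
  toFun v := (Quotient.mk (orbitSetoid φ) v, coord φ v)
  invFun p := φ p.2 p.1.out
  left_inv := coord_spec φ
  right_inv := fun ⟨q, g⟩ => by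
    show (Quotient.mk _ (φ g q.out), coord φ (φ g q.out)) = (q, g)
    rw [mk_apply, Quotient.out_eq, coord_apply hfree, coord_out hfree, mul_one]

theorem prodEquiv_apply (hfree : ∀ (g : G) (v : V), φ g v = v → g = 1) (v : V) :
    prodEquiv hfree v = (Quotient.mk (orbitSetoid φ) v, coord φ v) :=
  rfl

variable (φ) in
def voltage (R : V → V → Prop) (g : G) (q q' : Quotient (orbitSetoid φ)) : Prop :=
  R q.out (φ g q'.out)

theorem rel_iff_voltage {R : V → V → Prop}
    (hinv : ∀ (g : G) (u v : V), R (φ g u) (φ g v) ↔ R u v) (u v : V) :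
    R u v ↔ voltage φ R ((coord φ u)⁻¹ * coord φ v)
      (Quotient.mk (orbitSetoid φ) u) (Quotient.mk (orbitSetoid φ) v) := by
  conv_rhs => rw [voltage, ← hinv (coord φ u)]
  rw [coord_spec, ← Equiv.Perm.mul_apply, ← map_mul, mul_inv_cancel_left, coord_spec]

end orbitSetoid

theorem gross_tucker_quotient_general {V : Type} {G : Type} [Group G]
    (φ : G →* Equiv.Perm V)
    (hfree : ∀ (g : G) (v : V), φ g v = v → g = 1)
    (R : V → V → Prop)
    (hinv : ∀ (g : G) (u v : V), R (φ g u) (φ g v) ↔ R u v) :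
    ∃ (A : G → Quotient (orbitSetoid φ) → Quotient (orbitSetoid φ) → Prop)
      (e : V ≃ Quotient (orbitSetoid φ) × G),
      (∀ v : V, (e v).1 = Quotient.mk (orbitSetoid φ) v) ∧
      (∀ (g : G) (v : V), e (φ g v) = ((e v).1, g * (e v).2)) ∧
      (∀ u v : V, R u v ↔ A ((e u).2⁻¹ * (e v).2) (e u).1 (e v).1) :=
  ⟨orbitSetoid.voltage φ R, orbitSetoid.prodEquiv hfree, fun _ => rfl,
    fun g v => by
      simp only [orbitSetoid.prodEquiv_apply, orbitSetoid.mk_apply, orbitSetoid.coord_apply hfree],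
    orbitSetoid.rel_iff_voltage hinv⟩

/-- **Gross–Tucker, constructive direction.** Given a free action `φ` of a finite group `G`
on a finite set `V` preserving the relation `R`, there is a `G`-voltage family on the orbit
space `Q = V / G` and a bijection `e : V ≃ Q × G` whose first component is the orbit map,
which is `G`-equivariant, and which carries `R` to the derived relation of the voltage
family. -/
theorem gross_tucker_quotient {V : Type} [Fintype V] {G : Type} [Group G] [Fintype G]
    (φ : G →* Equiv.Perm V)
    (hfree : ∀ (g : G) (v : V), φ g v = v → g = 1)
    (R : V → V → Prop)
    (hinv : ∀ (g : G) (u v : V), R (φ g u) (φ g v) ↔ R u v) :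
    ∃ (A : G → Quotient (orbitSetoid φ) → Quotient (orbitSetoid φ) → Prop)
      (e : V ≃ Quotient (orbitSetoid φ) × G),
      (∀ v : V, (e v).1 = Quotient.mk (orbitSetoid φ) v) ∧
      (∀ (g : G) (v : V), e (φ g v) = ((e v).1, g * (e v).2)) ∧
      (∀ u v : V, R u v ↔ A ((e u).2⁻¹ * (e v).2) (e u).1 (e v).1) :=
  gross_tucker_quotient_general φ hfree R hinv
end

section
/- Let G be a finite abelian group with dual group Ĝ = Hom(G, ℂˣ) of characters, let B be a complex algebra, let α : G → Aut_ℂ(B) be an action of G on B by ℂ-algebra automorphisms, and suppose u : Ĝ → Bˣ is a family of invertible elements of B such that α_g(u_χ) = χ(g) · u_χ for all g ∈ G and χ ∈ Ĝ. Let B^α = {b ∈ B : α_g(b) = b for all g ∈ G} be the fixed-point subalgebra. Then every element b ∈ B admits a unique decomposition b = ∑_{χ ∈ Ĝ} b_χ · u_χ with b_χ ∈ B^α for every χ ∈ Ĝ; that is, there exists a unique function f : Ĝ → B with f(χ) ∈ B^α for all χ and b = ∑_{χ ∈ Ĝ} f(χ) · u_χ. -/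
/-!
Averaging the action against a character `χ`, `P_χ b = |G|⁻¹ ∑_g χ(g)⁻¹ α_g(b)`, projects onto the
`χ`-eigenspace of the action; by the two orthogonality relations for characters these projections
kill every other eigenspace and add up to the identity, so `B` is the direct sum of its character
eigenspaces. Multiplication by the eigenvector `u_χ` is a bijection from the fixed points `B^α`
onto the `χ`-eigenspace, with inverse multiplication by `u_χ⁻¹`, which turns this decomposition
into `b = ∑_χ (P_χ b · u_χ⁻¹) · u_χ` and forces every other decomposition to agree with it.
-/

open Finset

theorem sum_monoidHom_apply_eq_ite {k G : Type*} [Field k] [CommGroup G] [Fintype G]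
    [Fintype (G →* kˣ)] [HasEnoughRootsOfUnity k (Monoid.exponent G)] [DecidableEq G] (g : G) :
    ∑ χ : G →* kˣ, (χ g : k) = if g = 1 then (Fintype.card G : k) else 0 := by
  classical
  have hcard : Fintype.card (G →* kˣ) = Fintype.card G := by
    simpa only [Nat.card_eq_fintype_card] using
      CommGroup.card_monoidHom_of_hasEnoughRootsOfUnity G k
  have heval : (Units.coeHom k).comp (MonoidHom.eval g) = 1 ↔ g = 1 := by
    rw [← CommGroup.forall_apply_eq_apply_iff G (M := k) (g' := 1)]
    simp only [MonoidHom.ext_iff, MonoidHom.comp_apply, MonoidHom.eval_apply_apply,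
      Units.coeHom_apply, MonoidHom.one_apply, Units.val_eq_one, map_one]
  simpa only [heval, hcard, MonoidHom.comp_apply, Units.coeHom_apply, MonoidHom.eval_apply_apply,
    Nat.cast_ite, Nat.cast_zero] using sum_hom_units ((Units.coeHom k).comp (MonoidHom.eval g))

namespace Representation

section

variable {k G V : Type*} [Field k] [CommGroup G] [AddCommGroup V] [Module k V]
  (ρ : Representation k G V)

def charSpace (χ : G →* kˣ) : Submodule k V where
  carrier := {v | ∀ g, ρ g v = (χ g : k) • v}
  add_mem' hv hw g := by simp only [map_add, smul_add, hv g, hw g]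
  zero_mem' g := by simp only [map_zero, smul_zero]
  smul_mem' c v hv g := by simp only [map_smul, hv g, smul_comm c]

theorem mem_charSpace {χ : G →* kˣ} {v : V} : v ∈ ρ.charSpace χ ↔ ∀ g, ρ g v = (χ g : k) • v :=
  Iff.rfl

theorem mem_charSpace_one {v : V} : v ∈ ρ.charSpace 1 ↔ ∀ g, ρ g v = v := by
  simp only [mem_charSpace, MonoidHom.one_apply, Units.val_one, one_smul]

variable [Fintype G]

noncomputable def charProj (χ : G →* kˣ) : V →ₗ[k] V :=
  (Fintype.card G : k)⁻¹ • ∑ g, (χ g : k)⁻¹ • ρ g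

theorem charProj_apply (χ : G →* kˣ) (v : V) :
    ρ.charProj χ v = (Fintype.card G : k)⁻¹ • ∑ g, (χ g : k)⁻¹ • ρ g v := by
  simp only [charProj, LinearMap.smul_apply, LinearMap.sum_apply]

theorem charProj_mem_charSpace (χ : G →* kˣ) (v : V) : ρ.charProj χ v ∈ ρ.charSpace χ := by
  intro h
  rw [charProj_apply, map_smul, smul_comm, map_sum]
  congr 1
  rw [Finset.smul_sum]
  refine Fintype.sum_equiv (Equiv.mulLeft h) _ _ fun g => ?_
  rw [Equiv.coe_mulLeft, map_smul, map_mul, map_mul, Module.End.mul_apply, smul_smul,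
    Units.val_mul, mul_inv, mul_inv_cancel_left₀ (χ h).ne_zero]

theorem charProj_eq_zero_of_mem_charSpace {χ ψ : G →* kˣ} (hψχ : ψ ≠ χ) {v : V}
    (hv : v ∈ ρ.charSpace ψ) : ρ.charProj χ v = 0 := by
  have hterm : ∀ g, (χ g : k)⁻¹ • ρ g v = (Units.coeHom k).comp (ψ / χ) g • v := fun g => by
    rw [hv g, smul_smul, MonoidHom.comp_apply, Units.coeHom_apply, MonoidHom.div_apply,
      Units.val_div_eq_div_val, inv_mul_eq_div]
  have hne : (Units.coeHom k).comp (ψ / χ) ≠ 1 := fun h =>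
    hψχ (div_eq_one.mp (MonoidHom.ext fun g => Units.ext (DFunLike.congr_fun h g)))
  simp only [charProj_apply, hterm, ← sum_smul, sum_hom_units_eq_zero _ hne, zero_smul, smul_zero]

variable [CharZero k]

theorem charProj_of_mem_charSpace {χ : G →* kˣ} {v : V} (hv : v ∈ ρ.charSpace χ) :
    ρ.charProj χ v = v := by
  have hcard : (Fintype.card G : k) ≠ 0 := Nat.cast_ne_zero.mpr Fintype.card_ne_zero
  simp only [charProj_apply, hv _, smul_smul, inv_mul_cancel₀ (χ _).ne_zero, one_smul, sum_const,
    card_univ, ← Nat.cast_smul_eq_nsmul k, inv_mul_cancel₀ hcard]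

theorem charProj_sum_of_mem_charSpace [Fintype (G →* kˣ)] {w : (G →* kˣ) → V}
    (hw : ∀ χ, w χ ∈ ρ.charSpace χ) (χ : G →* kˣ) : ρ.charProj χ (∑ ψ, w ψ) = w χ := by
  rw [map_sum, sum_eq_single χ (fun ψ _ hψχ => ρ.charProj_eq_zero_of_mem_charSpace hψχ (hw ψ))
    (fun h => absurd (mem_univ χ) h), ρ.charProj_of_mem_charSpace (hw χ)]

theorem sum_charProj [Fintype (G →* kˣ)] [HasEnoughRootsOfUnity k (Monoid.exponent G)]
    (v : V) : ∑ χ : G →* kˣ, ρ.charProj χ v = v := by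
  classical
  have hcard : (Fintype.card G : k) ≠ 0 := Nat.cast_ne_zero.mpr Fintype.card_ne_zero
  simp only [charProj_apply, ← Finset.smul_sum]
  rw [Finset.sum_comm]
  simp only [← Finset.sum_smul, ← Units.val_inv_eq_inv_val, ← map_inv, sum_monoidHom_apply_eq_ite,
    inv_eq_one, ite_smul, zero_smul, sum_ite_eq', mem_univ, if_true, map_one,
    Module.End.one_apply, smul_smul, inv_mul_cancel₀ hcard, one_smul]

end

section

variable {k G B : Type*} [Field k] [CommGroup G] [Ring B] [Algebra k B]

def ofAlgAut (α : G →* (B ≃ₐ[k] B)) : Representation k G B :=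
  (AlgEquiv.toLinearMapHom k B).comp α

@[simp]
theorem ofAlgAut_apply (α : G →* (B ≃ₐ[k] B)) (g : G) (b : B) : ofAlgAut α g b = α g b :=
  rfl

variable {α : G →* (B ≃ₐ[k] B)}

theorem mul_mem_charSpace_ofAlgAut {χ ψ : G →* kˣ} {x y : B}
    (hx : x ∈ (ofAlgAut α).charSpace χ) (hy : y ∈ (ofAlgAut α).charSpace ψ) :
    x * y ∈ (ofAlgAut α).charSpace (χ * ψ) := fun g => by
  rw [ofAlgAut_apply, map_mul, ← ofAlgAut_apply, ← ofAlgAut_apply, hx g, hy g,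
    smul_mul_smul_comm, MonoidHom.mul_apply, Units.val_mul]

theorem inv_mem_charSpace_ofAlgAut {χ : G →* kˣ} {u : Bˣ}
    (hu : (u : B) ∈ (ofAlgAut α).charSpace χ) :
    ((u⁻¹ : Bˣ) : B) ∈ (ofAlgAut α).charSpace χ⁻¹ := fun g => by
  have hleft : α g ↑u⁻¹ * ((χ g : k) • (u : B)) = 1 := by
    rw [← hu g, ofAlgAut_apply, ← map_mul, Units.inv_mul, map_one]
  have hright : ((χ g : k) • (u : B)) * ((χ g : k)⁻¹ • ((u⁻¹ : Bˣ) : B)) = 1 := by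
    rw [smul_mul_smul_comm, mul_inv_cancel₀ (χ g).ne_zero, Units.mul_inv, one_smul]
  rw [ofAlgAut_apply, left_inv_eq_right_inv hleft hright, MonoidHom.inv_apply,
    Units.val_inv_eq_inv_val]

end

end Representation

/-- **Linear-algebraic core of Landstad duality.** Let `G` be a finite abelian group with
dual group `Ĝ = (G →* ℂˣ)`, let `B` be a complex algebra with an action
`α : G →* (B ≃ₐ[ℂ] B)` by algebra automorphisms, and let `u : Ĝ → Bˣ` be a family of
invertible elements with `α g (u χ) = χ g • u χ`. Then every `b : B` decomposes uniquely
as `b = ∑ χ, f χ * u χ` with all coefficients `f χ` in the fixed-point subalgebra `B^α`. -/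
theorem landstad_spectral_decomposition {G : Type} [CommGroup G] [Fintype G]
    [Fintype (G →* ℂˣ)] {B : Type} [Ring B] [Algebra ℂ B]
    (α : G →* (B ≃ₐ[ℂ] B))
    (u : (G →* ℂˣ) → Bˣ)
    (hu : ∀ (g : G) (χ : G →* ℂˣ), α g (u χ : B) = (χ g : ℂ) • (u χ : B)) :
    ∀ b : B, ∃! f : (G →* ℂˣ) → B,
      (∀ (χ : G →* ℂˣ) (g : G), α g (f χ) = f χ) ∧
      b = ∑ χ : G →* ℂˣ, f χ * (u χ : B) := by
  intro b
  -- gives the instance `HasEnoughRootsOfUnity ℂ (Monoid.exponent G)`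
  have : NeZero (Monoid.exponent G) := ⟨Monoid.exponent_ne_zero_of_finite⟩
  let ρ := Representation.ofAlgAut α
  have hu_mem (χ : G →* ℂˣ) : (u χ : B) ∈ ρ.charSpace χ := fun g => hu g χ
  have fixed_iff (x : B) : (∀ g, α g x = x) ↔ x ∈ ρ.charSpace 1 := ρ.mem_charSpace_one.symm
  refine ⟨fun χ => ρ.charProj χ b * ↑(u χ)⁻¹, ⟨fun χ => ?_, ?_⟩, ?_⟩
  · rw [fixed_iff, ← mul_inv_cancel χ]
    exact Representation.mul_mem_charSpace_ofAlgAut (ρ.charProj_mem_charSpace χ b)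
      (Representation.inv_mem_charSpace_ofAlgAut (hu_mem χ))
  · simp only [mul_assoc, Units.inv_mul, mul_one]
    exact (ρ.sum_charProj b).symm
  · rintro f ⟨hf, rfl⟩
    funext χ
    have hfu (ψ : G →* ℂˣ) : f ψ * u ψ ∈ ρ.charSpace ψ := by
      convert Representation.mul_mem_charSpace_ofAlgAut ((fixed_iff _).1 (hf ψ)) (hu_mem ψ)
        using 2
      exact (one_mul ψ).symm
    rw [ρ.charProj_sum_of_mem_charSpace hfu, mul_assoc, Units.mul_inv, mul_one]
end

section
/- Let G be a finite abelian group acting on a finite set V. Then the action is free (i.e. g • v = v for some v ∈ V implies g = 1) if and only if there exists a family u assigning to every character χ ∈ Ĝ = Hom(G, ℂˣ) a function u_χ : V → ℂˣ such that: (i) u is multiplicative in χ, i.e. u_{χ·χ'}(v) = u_χ(v) · u_{χ'}(v) for all χ, χ' ∈ Ĝ and v ∈ V; and (ii) u_χ(g • v) = χ(g) · u_χ(v) for all χ ∈ Ĝ, g ∈ G and v ∈ V. -/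
/-!
A free action admits a `G`-equivariant map `c : V → G` (send `v` to the unique group element
carrying a fixed representative of its orbit to `v`), and then `u χ := χ ∘ c` is the required
family. Conversely, if `g • v = v` then `u χ v = χ g * u χ v` forces `χ g = 1` for every
character `χ`, and characters of a finite abelian group separate its points, so `g = 1`.
-/

namespace MulAction

variable {G V : Type*} [Group G] [MulAction G V]

theorem smul_left_injective_of_free (hfree : ∀ (g : G) (v : V), g • v = v → g = 1) (x : V) :
    Function.Injective (· • x : G → V) := by
  intro g h hgh
  have : (h⁻¹ * g) • x = x := by
    simp only [mul_smul] at hgh ⊢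
    rw [hgh, inv_smul_smul]
  exact (inv_mul_eq_one.mp (hfree _ x this)).symm

theorem exists_equivariant_map_to_self_of_free (hfree : ∀ (g : G) (v : V), g • v = v → g = 1) :
    ∃ c : V → G, ∀ (g : G) (v : V), c (g • v) = g * c v := by
  let r : V → V := fun v => (⟦v⟧ : orbitRel.Quotient G V).out
  have r_smul : ∀ (g : G) (v : V), r (g • v) = r v := fun g v =>
    congrArg Quotient.out (Quotient.sound (mem_orbit v g))
  have exists_smul_r : ∀ v, ∃ g : G, g • r v = v := fun v => by
    obtain ⟨g, hg⟩ := Quotient.mk_out (s := orbitRel G V) v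
    exact ⟨g⁻¹, inv_smul_eq_iff.mpr hg.symm⟩
  choose c hc using exists_smul_r
  refine ⟨c, fun g v => smul_left_injective_of_free hfree (r v) ?_⟩
  change c (g • v) • r v = (g * c v) • r v
  rw [← r_smul g v, hc, r_smul, mul_smul, hc]

end MulAction

theorem MulAction.eq_one_of_smul_eq_self_of_dual_covariant {G V M : Type*} [CommGroup G]
    [Finite G] [CommMonoid M] [HasEnoughRootsOfUnity M (Monoid.exponent G)] [MulAction G V]
    (u : (G →* Mˣ) → V → Mˣ) (hu : ∀ (χ : G →* Mˣ) (g : G) (v : V), u χ (g • v) = χ g * u χ v)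
    {g : G} {v : V} (hgv : g • v = v) : g = 1 := by
  by_contra hg
  obtain ⟨χ, hχ⟩ := CommGroup.exists_apply_ne_one_of_hasEnoughRootsOfUnity G M hg
  have := hu χ g v
  rw [hgv] at this
  exact hχ (right_eq_mul.mp this)

theorem free_action_iff_dual_representation_general {G V : Type} [CommGroup G] [Fintype G]
    [MulAction G V] :
    (∀ (g : G) (v : V), g • v = v → g = 1) ↔
    ∃ u : (G →* ℂˣ) → V → ℂˣ,
      (∀ (χ χ' : G →* ℂˣ) (v : V), u (χ * χ') v = u χ v * u χ' v) ∧
      (∀ (χ : G →* ℂˣ) (g : G) (v : V), u χ (g • v) = χ g * u χ v) := by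
  constructor
  · intro hfree
    obtain ⟨c, hc⟩ := MulAction.exists_equivariant_map_to_self_of_free hfree
    exact ⟨fun χ v => χ (c v), fun _ _ _ => rfl, fun χ g v => by simp only [hc, map_mul]⟩
  · rintro ⟨u, -, hu⟩ g v
    exact MulAction.eq_one_of_smul_eq_self_of_dual_covariant u hu

/-- **Landstad's condition = freeness for classical finite sets.** An action of a finite
abelian group `G` on a finite set `V` is free if and only if there is a family `u`
assigning to each character `χ : G →* ℂˣ` a function `u χ : V → ℂˣ` which is
multiplicative in `χ` and satisfies `u χ (g • v) = χ g * u χ v`, i.e. a unitary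
representation of the dual group inside the function algebra on `V`. -/
theorem free_action_iff_dual_representation {G V : Type} [CommGroup G] [Fintype G]
    [Fintype V] [MulAction G V] :
    (∀ (g : G) (v : V), g • v = v → g = 1) ↔
    ∃ u : (G →* ℂˣ) → V → ℂˣ,
      (∀ (χ χ' : G →* ℂˣ) (v : V), u (χ * χ') v = u χ v * u χ' v) ∧
      (∀ (χ : G →* ℂˣ) (g : G) (v : V), u χ (g • v) = χ g * u χ v) :=
  free_action_iff_dual_representation_general
end
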